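/- Let A, B, C, D ∈ ℚ[t] have degrees s_a, s_b, s_c, s_d with s_d > s_b + 1, s_d > s_c + 1 and s_d > s_a. If x ∈ ℚ((t⁻¹)) solves D x' = A + B x + C x² and deg x ≥ 1, then deg x = s_d − s_c − 1 and the leading coefficient of x equals (s_d − s_c − 1)·(leading coeff of D)/(leading coeff of C). -/

import Mathlib

/-!
Compare orders at `t = ∞` in `D x' = A + B x + C x²`. If `x` has order `ν ≤ -1`, then `D x'` has
order `ν + 1 - s_d` and leading coefficient `-ν · lc D · lc x`, and this order lies strictly below
the orders of `A` and `B x`. So `D x'` must cancel against `C x²`, of order `2ν - s_c`: their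
orders agree, which gives `ν = s_c - s_d + 1`, and so do their leading coefficients, which gives
`lc C · (lc x)² = -ν · lc D · lc x`.
-/

open Polynomial

/-- The formal derivative (with respect to `X`) of a formal Laurent series. -/
noncomputable def lsDeriv {F : Type*} [Field F] (f : LaurentSeries F) : LaurentSeries F where
  coeff n := (n + 1 : ℤ) * f.coeff (n + 1)
  isPWO_support' := by
    refine ((HahnSeries.single (-1 : ℤ) (1 : F) * f).isPWO_support).mono ?_
    intro n hn
    have hf : f.coeff (n + 1) ≠ 0 := by
      intro h
      apply hn
      simp [h]
    have hcoeff : (HahnSeries.single (-1 : ℤ) (1 : F) * f).coeff n = f.coeff (n + 1) := by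
      have := HahnSeries.coeff_single_mul_add (r := (1 : F)) (x := f) (b := (-1 : ℤ)) (a := n + 1)
      simpa using this
    simp only [HahnSeries.mem_support, hcoeff]
    exact hf

/-- `t`, as an element of `ℚ((t⁻¹))`: the field of Laurent series in `X = t⁻¹`,
so `t = X⁻¹` is the Hahn series with a single coefficient `1` in degree `-1`. -/
noncomputable def lsT : LaurentSeries ℚ := HahnSeries.single (-1 : ℤ) 1

/-- The formal derivative with respect to `t` on `ℚ((t⁻¹))`: since `X = t⁻¹`,
`d/dt = -X² · d/dX`. -/
noncomputable def tDeriv (f : LaurentSeries ℚ) : LaurentSeries ℚ :=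
  -(HahnSeries.single (2 : ℤ) (1 : ℚ)) * lsDeriv f

namespace HahnSeries

theorem order_eq_and_leadingCoeff_eq_of_coeff_eq {Γ R : Type*} [Zero Γ] [LinearOrder Γ] [Zero R]
    {y z : HahnSeries Γ R} (hy : y ≠ 0) (h : ∀ n ≤ y.order, z.coeff n = y.coeff n) :
    z.order = y.order ∧ z.leadingCoeff = y.leadingCoeff := by
  have hz : z.coeff y.order ≠ 0 := by rw [h _ le_rfl]; exact coeff_order_eq_zero.not.mpr hy
  have hord : z.order = y.order := by
    refine le_antisymm (order_le_of_coeff_ne_zero hz) (not_lt.mp fun hlt => ?_)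
    refine coeff_order_eq_zero.not.mpr (ne_zero_of_coeff_ne_zero hz) ?_
    rw [h _ hlt.le]
    exact coeff_eq_zero_of_lt_order hlt
  exact ⟨hord, by rw [leadingCoeff_eq, leadingCoeff_eq, hord, h _ le_rfl]⟩

theorem coeff_mul_eq_zero_of_lt_order_add_order {Γ R : Type*} [AddCommMonoid Γ] [LinearOrder Γ]
    [IsOrderedCancelAddMonoid Γ] [NonUnitalNonAssocSemiring R] {x y : HahnSeries Γ R} {n : Γ}
    (hn : n < x.order + y.order) : (x * y).coeff n = 0 := by
  rcases eq_or_ne x 0 with rfl | hx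
  · rw [zero_mul, coeff_zero]
  rcases eq_or_ne y 0 with rfl | hy
  · rw [mul_zero, coeff_zero]
  refine coeff_eq_zero_of_lt_orderTop (lt_of_lt_of_le ?_ orderTop_add_le_mul)
  rwa [← order_eq_orderTop_of_ne_zero hx, ← order_eq_orderTop_of_ne_zero hy, ← WithTop.coe_add,
    WithTop.coe_lt_coe]

end HahnSeries

theorem coeff_aeval_lsT (P : ℚ[X]) (n : ℤ) :
    (aeval lsT P).coeff n = if n ≤ 0 then P.coeff (-n).toNat else 0 := by
  induction P using Polynomial.induction_on' with
  | add p q hp hq =>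
    rw [map_add, HahnSeries.coeff_add, hp, hq, coeff_add]
    split_ifs <;> simp
  | monomial k c =>
    have hmon : aeval lsT (monomial k c) = HahnSeries.single (-(k : ℤ)) c := by
      rw [aeval_monomial, lsT, HahnSeries.single_pow, LaurentSeries.algebraMap_apply,
        HahnSeries.C_apply, HahnSeries.single_mul_single]
      simp
    rw [hmon, HahnSeries.coeff_single, coeff_monomial]
    by_cases hn : n = -(k : ℤ)
    · rw [if_pos hn, if_pos (by omega), if_pos (by omega)]
    · rw [if_neg hn]
      split_ifs <;> first | rfl | omega

theorem coeff_aeval_lsT_natDegree (P : ℚ[X]) :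
    (aeval lsT P).coeff (-(P.natDegree : ℤ)) = P.leadingCoeff := by
  rw [coeff_aeval_lsT, if_pos (by omega), neg_neg, Int.toNat_natCast, Polynomial.leadingCoeff]

theorem coeff_aeval_lsT_of_lt (P : ℚ[X]) {n : ℤ} (hn : n < -(P.natDegree : ℤ)) :
    (aeval lsT P).coeff n = 0 := by
  rw [coeff_aeval_lsT]
  split_ifs
  · exact coeff_eq_zero_of_natDegree_lt (by omega)
  · rfl

theorem neg_natDegree_le_order_aeval_lsT (P : ℚ[X]) :
    -(P.natDegree : ℤ) ≤ (aeval lsT P).order := by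
  by_contra! h
  have h0 : aeval lsT P = 0 := HahnSeries.coeff_order_eq_zero.mp (coeff_aeval_lsT_of_lt P h)
  rw [h0, HahnSeries.order_zero] at h
  omega

theorem order_aeval_lsT {P : ℚ[X]} (hP : P ≠ 0) : (aeval lsT P).order = -(P.natDegree : ℤ) :=
  le_antisymm
    (HahnSeries.order_le_of_coeff_ne_zero
      (by rwa [coeff_aeval_lsT_natDegree, leadingCoeff_ne_zero]))
    (neg_natDegree_le_order_aeval_lsT P)

theorem leadingCoeff_aeval_lsT {P : ℚ[X]} (hP : P ≠ 0) :
    (aeval lsT P).leadingCoeff = P.leadingCoeff := by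
  rw [HahnSeries.leadingCoeff_eq, order_aeval_lsT hP, coeff_aeval_lsT_natDegree]

theorem aeval_lsT_ne_zero {P : ℚ[X]} (hP : P ≠ 0) : aeval lsT P ≠ 0 :=
  HahnSeries.leadingCoeff_ne_zero.mp (by rwa [leadingCoeff_aeval_lsT hP, leadingCoeff_ne_zero])

theorem coeff_tDeriv (f : LaurentSeries ℚ) (n : ℤ) :
    (tDeriv f).coeff n = (1 - n) * f.coeff (n - 1) := by
  have h := HahnSeries.coeff_single_mul_add (r := (1 : ℚ)) (x := lsDeriv f) (a := n - 2) (b := 2)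
  rw [sub_add_cancel] at h
  rw [tDeriv, neg_mul, HahnSeries.coeff_neg, h]
  change -(1 * (((n - 2 + 1 : ℤ) : ℚ) * f.coeff (n - 2 + 1))) = _
  rw [show n - 2 + 1 = n - 1 by ring]
  push_cast
  ring

theorem coeff_tDeriv_order_add_one (f : LaurentSeries ℚ) :
    (tDeriv f).coeff (f.order + 1) = -f.order * f.leadingCoeff := by
  rw [coeff_tDeriv, add_sub_cancel_right, HahnSeries.leadingCoeff_eq]
  push_cast
  ring

theorem coeff_tDeriv_order_add_one_ne_zero {f : LaurentSeries ℚ} (hf : f.order ≠ 0) :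
    (tDeriv f).coeff (f.order + 1) ≠ 0 := by
  have hf0 : f ≠ 0 := by rintro rfl; exact hf HahnSeries.order_zero
  rw [coeff_tDeriv_order_add_one]
  exact mul_ne_zero (neg_ne_zero.mpr (Int.cast_ne_zero.mpr hf))
    (HahnSeries.leadingCoeff_ne_zero.mpr hf0)

theorem tDeriv_ne_zero {f : LaurentSeries ℚ} (hf : f.order ≠ 0) : tDeriv f ≠ 0 :=
  HahnSeries.ne_zero_of_coeff_ne_zero (coeff_tDeriv_order_add_one_ne_zero hf)

theorem order_tDeriv {f : LaurentSeries ℚ} (hf : f.order ≠ 0) :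
    (tDeriv f).order = f.order + 1 := by
  have hlead := coeff_tDeriv_order_add_one_ne_zero hf
  refine le_antisymm (HahnSeries.order_le_of_coeff_ne_zero hlead) (not_lt.mp fun hlt => ?_)
  refine HahnSeries.coeff_order_eq_zero.not.mpr (HahnSeries.ne_zero_of_coeff_ne_zero hlead) ?_
  rw [coeff_tDeriv, HahnSeries.coeff_eq_zero_of_lt_order (by omega), mul_zero]

theorem leadingCoeff_tDeriv {f : LaurentSeries ℚ} (hf : f.order ≠ 0) :
    (tDeriv f).leadingCoeff = -f.order * f.leadingCoeff := by
  rw [HahnSeries.leadingCoeff_eq, order_tDeriv hf, coeff_tDeriv_order_add_one]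

theorem riccati_degree_leading_coeff'_general (A B C D : Polynomial ℚ)
    (hC : C ≠ 0) (hD : D ≠ 0)
    (hdb : B.natDegree + 1 < D.natDegree)
    (hda : A.natDegree < D.natDegree)
    (x : LaurentSeries ℚ)
    (hx : aeval lsT D * tDeriv x = aeval lsT A + aeval lsT B * x + aeval lsT C * x ^ 2)
    (hdeg : x.order ≤ -1) :
    -x.order = (D.natDegree : ℤ) - C.natDegree - 1 ∧
      x.coeff x.order =
        ((D.natDegree : ℚ) - C.natDegree - 1) * D.leadingCoeff / C.leadingCoeff := by
  have hν : x.order ≠ 0 := by omega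
  have hx0 : x ≠ 0 := by rintro rfl; exact hν HahnSeries.order_zero
  have hy0 : aeval lsT D * tDeriv x ≠ 0 := mul_ne_zero (aeval_lsT_ne_zero hD) (tDeriv_ne_zero hν)
  have hyord : (aeval lsT D * tDeriv x).order = -(D.natDegree : ℤ) + (x.order + 1) := by
    rw [HahnSeries.order_mul (aeval_lsT_ne_zero hD) (tDeriv_ne_zero hν), order_aeval_lsT hD,
      order_tDeriv hν]
  have hagree : ∀ n ≤ (aeval lsT D * tDeriv x).order,
      (aeval lsT C * x ^ 2).coeff n = (aeval lsT D * tDeriv x).coeff n := by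
    intro n hn
    have hBx := neg_natDegree_le_order_aeval_lsT B
    rw [hx, HahnSeries.coeff_add, HahnSeries.coeff_add, coeff_aeval_lsT_of_lt A (by omega),
      HahnSeries.coeff_mul_eq_zero_of_lt_order_add_order (x := aeval lsT B) (by omega),
      zero_add, zero_add]
  obtain ⟨hord, hlc⟩ := HahnSeries.order_eq_and_leadingCoeff_eq_of_coeff_eq hy0 hagree
  rw [HahnSeries.order_mul (aeval_lsT_ne_zero hC) (pow_ne_zero 2 hx0), order_aeval_lsT hC,
    HahnSeries.order_pow, two_nsmul, hyord] at hord
  rw [HahnSeries.leadingCoeff_mul, HahnSeries.leadingCoeff_mul, leadingCoeff_aeval_lsT hC,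
    leadingCoeff_aeval_lsT hD, leadingCoeff_tDeriv hν, sq, HahnSeries.leadingCoeff_mul] at hlc
  have hdegx : -x.order = (D.natDegree : ℤ) - C.natDegree - 1 := by omega
  have hcast : (-x.order : ℚ) = (D.natDegree : ℚ) - C.natDegree - 1 := by exact_mod_cast hdegx
  refine ⟨hdegx, ?_⟩
  rw [← HahnSeries.leadingCoeff_eq, eq_div_iff (leadingCoeff_ne_zero.mpr hC), ← hcast]
  apply mul_left_cancel₀ (HahnSeries.leadingCoeff_ne_zero.mpr hx0)
  linear_combination hlc

/-- Let `A, B, C, D ∈ ℚ[t]` have degrees `s_a, s_b, s_c, s_d` with `s_d > s_b + 1`,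
`s_d > s_c + 1` and `s_d > s_a`. If `x ∈ ℚ((t⁻¹))` solves `D x' = A + B x + C x²` and
`deg x ≥ 1` (degree of a Laurent series being minus its order), then
`deg x = s_d − s_c − 1` and the leading coefficient of `x` equals
`(s_d − s_c − 1)·(leading coeff of D)/(leading coeff of C)`. -/
theorem riccati_degree_leading_coeff' (A B C D : Polynomial ℚ)
    (hC : C ≠ 0) (hD : D ≠ 0)
    (hdb : B.natDegree + 1 < D.natDegree)
    (hdc : C.natDegree + 1 < D.natDegree)
    (hda : A.natDegree < D.natDegree)
    (x : LaurentSeries ℚ)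
    (hx : aeval lsT D * tDeriv x = aeval lsT A + aeval lsT B * x + aeval lsT C * x ^ 2)
    (hdeg : x.order ≤ -1) :
    -x.order = (D.natDegree : ℤ) - C.natDegree - 1 ∧
      x.coeff x.order =
        ((D.natDegree : ℚ) - C.natDegree - 1) * D.leadingCoeff / C.leadingCoeff :=
  riccati_degree_leading_coeff'_general A B C D hC hD hdb hda x hx hdeg
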